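/- arXiv:2605.13264 — 7 statements merged into one kernel-verified Lean document; each statement's English description precedes it below -/
import Mathlib

section
/- Let G = (V, E) be a finite simple graph, let w₀ : V → ℝ be nonnegative vertex weights, and let δ : E → ℝ be a nonnegative G-valid edge-weight function, i.e. for every vertex v, the sum of δ(e) over edges e incident to v is at most w₀(v). Define w(v) := w₀(v) − Σ_{e ∋ v} δ(e). Fix ε > 0 and set ε' := ε/(2+ε), and let S := {v ∈ V : w(v) ≤ ε'·w₀(v)}. If S is a vertex cover of G (every edge has at least one endpoint in S), then for every vertex cover T of G we have Σ_{v ∈ S} w₀(v) ≤ (2+ε)·Σ_{v ∈ T} w₀(v); in particular S is a (2+ε)-approximate minimum weight vertex cover. -/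
/-- **Local ratio theorem for minimum weight vertex cover.**
If `δ` is a nonnegative `G`-valid edge weighting for nonnegative vertex weights `w₀`,
`w v = w₀ v - Σ_{e ∋ v} δ e`, and `S = {v : w v ≤ ε' w₀ v}` (with `ε' = ε/(2+ε)`) is a
vertex cover, then the `w₀`-weight of `S` is at most `2+ε` times that of any vertex
cover `T`. -/
theorem local_ratio_vertex_cover
    {V : Type*} [Fintype V] [DecidableEq V]
    (G : SimpleGraph V) [DecidableRel G.Adj]
    (w₀ : V → ℝ) (hw₀ : ∀ v, 0 ≤ w₀ v)
    (δ : Sym2 V → ℝ) (hδ0 : ∀ e ∈ G.edgeSet, 0 ≤ δ e)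
    (hvalid : ∀ v : V, ∑ e ∈ G.edgeFinset.filter (fun e => v ∈ e), δ e ≤ w₀ v)
    (w : V → ℝ)
    (hw : ∀ v : V, w v = w₀ v - ∑ e ∈ G.edgeFinset.filter (fun e => v ∈ e), δ e)
    (ε : ℝ) (hε : 0 < ε)
    (S : Finset V)
    (hS : S = Finset.univ.filter (fun v => w v ≤ (ε / (2 + ε)) * w₀ v))
    (hScover : ∀ ⦃a b : V⦄, G.Adj a b → a ∈ S ∨ b ∈ S)
    (T : Finset V) (hTcover : ∀ ⦃a b : V⦄, G.Adj a b → a ∈ T ∨ b ∈ T) :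
    ∑ v ∈ S, w₀ v ≤ (2 + ε) * ∑ v ∈ T, w₀ v := by
  have h2ε : (0:ℝ) < 2 + ε := by linarith
  have hδ0' : ∀ e ∈ G.edgeFinset, 0 ≤ δ e := fun e he =>
    hδ0 e (SimpleGraph.mem_edgeFinset.mp he)
  -- double counting identity
  have key : ∀ (U : Finset V),
      ∑ v ∈ U, ∑ e ∈ G.edgeFinset.filter (fun e => v ∈ e), δ e
        = ∑ e ∈ G.edgeFinset, ((U.filter (fun v => v ∈ e)).card : ℝ) * δ e := by
    intro U
    calc ∑ v ∈ U, ∑ e ∈ G.edgeFinset.filter (fun e => v ∈ e), δ e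
        = ∑ v ∈ U, ∑ e ∈ G.edgeFinset, if v ∈ e then δ e else 0 := by
          simp [Finset.sum_filter]
      _ = ∑ e ∈ G.edgeFinset, ∑ v ∈ U, if v ∈ e then δ e else 0 := Finset.sum_comm
      _ = ∑ e ∈ G.edgeFinset, ((U.filter (fun v => v ∈ e)).card : ℝ) * δ e := by
          refine Finset.sum_congr rfl fun e he => ?_
          rw [← Finset.sum_filter, Finset.sum_const, nsmul_eq_mul]
  -- inner sums are nonnegative
  have hinner : ∀ v : V, 0 ≤ ∑ e ∈ G.edgeFinset.filter (fun e => v ∈ e), δ e := by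
    intro v
    exact Finset.sum_nonneg fun e he => hδ0' e (Finset.mem_filter.mp he).1
  -- for v ∈ S : w₀ v ≤ ((2+ε)/2) * Σ_{e ∋ v} δ e
  have hSpt : ∀ v ∈ S, w₀ v ≤ ((2 + ε) / 2) *
      ∑ e ∈ G.edgeFinset.filter (fun e => v ∈ e), δ e := by
    intro v hv
    rw [hS, Finset.mem_filter] at hv
    have h1 := hv.2
    rw [hw v] at h1
    set D := ∑ e ∈ G.edgeFinset.filter (fun e => v ∈ e), δ e with hD
    have h2 : (w₀ v - D) * (2 + ε) ≤ (ε / (2 + ε)) * w₀ v * (2 + ε) := by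
      exact mul_le_mul_of_nonneg_right h1 h2ε.le
    rw [div_mul_eq_mul_div, mul_comm] at h2
    have h3 : (ε / (2 + ε)) * w₀ v * (2 + ε) = ε * w₀ v := by
      field_simp
    nlinarith [h2, h3]
  -- each edge has exactly 2 endpoints in univ
  have hcard2 : ∀ e ∈ G.edgeFinset,
      ((Finset.univ.filter (fun v => v ∈ e)).card : ℝ) = 2 := by
    intro e he
    induction e with
    | _ a b =>
      have hab : G.Adj a b := SimpleGraph.mem_edgeFinset.mp he
      have : Finset.univ.filter (fun v => v ∈ s(a, b)) = {a, b} := by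
        ext v
        simp [Sym2.mem_iff]
      rw [this, Finset.card_insert_of_notMem (by simp [hab.ne]), Finset.card_singleton]
      norm_num
  -- each edge has at least one endpoint in T
  have hcardT : ∀ e ∈ G.edgeFinset, δ e ≤ ((T.filter (fun v => v ∈ e)).card : ℝ) * δ e := by
    intro e he
    induction e with
    | _ a b =>
      have hab : G.Adj a b := SimpleGraph.mem_edgeFinset.mp he
      have hne : (T.filter (fun v => v ∈ s(a, b))).Nonempty := by
        rcases hTcover hab with h | h
        · exact ⟨a, Finset.mem_filter.mpr ⟨h, by simp⟩⟩
        · exact ⟨b, Finset.mem_filter.mpr ⟨h, by simp⟩⟩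
      have hc : (1 : ℝ) ≤ ((T.filter (fun v => v ∈ s(a, b))).card : ℝ) := by
        exact_mod_cast Finset.card_pos.mpr hne
      nlinarith [hδ0' _ he, hc]
  calc ∑ v ∈ S, w₀ v
      ≤ ∑ v ∈ S, ((2 + ε) / 2) * ∑ e ∈ G.edgeFinset.filter (fun e => v ∈ e), δ e :=
        Finset.sum_le_sum hSpt
    _ = ((2 + ε) / 2) * ∑ v ∈ S, ∑ e ∈ G.edgeFinset.filter (fun e => v ∈ e), δ e := by
        rw [Finset.mul_sum]
    _ ≤ ((2 + ε) / 2) * ∑ v : V, ∑ e ∈ G.edgeFinset.filter (fun e => v ∈ e), δ e := by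
        apply mul_le_mul_of_nonneg_left _ (by positivity)
        exact Finset.sum_le_sum_of_subset_of_nonneg (Finset.subset_univ S)
          (fun v _ _ => hinner v)
    _ = ((2 + ε) / 2) * ∑ e ∈ G.edgeFinset, (2 : ℝ) * δ e := by
        rw [key]
        congr 1
        exact Finset.sum_congr rfl fun e he => by rw [hcard2 e he]
    _ = (2 + ε) * ∑ e ∈ G.edgeFinset, δ e := by
        rw [← Finset.mul_sum]; ring
    _ ≤ (2 + ε) * ∑ e ∈ G.edgeFinset, ((T.filter (fun v => v ∈ e)).card : ℝ) * δ e := by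
        apply mul_le_mul_of_nonneg_left _ h2ε.le
        exact Finset.sum_le_sum hcardT
    _ = (2 + ε) * ∑ v ∈ T, ∑ e ∈ G.edgeFinset.filter (fun e => v ∈ e), δ e := by
        rw [key]
    _ ≤ (2 + ε) * ∑ v ∈ T, w₀ v := by
        apply mul_le_mul_of_nonneg_left _ h2ε.le
        exact Finset.sum_le_sum fun v _ => hvalid v
end

section
/- Let G be a finite connected simple graph with vertex set V and graph distance dist, let δ : V → ℝ be nonnegative shift values, and for each vertex x let CC(x) be a vertex u maximizing δ_u − dist(u, x) over u ∈ V. Suppose u is a vertex adjacent to v (dist(u, v) = 1) and let w := CC(u). Then δ_{CC(v)} − dist(CC(v), v) − 2 ≤ δ_w − dist(w, v) ≤ δ_{CC(v)} − dist(CC(v), v). That is, the center of any cluster containing a neighbor of v has shifted distance value within 2 of the winning value of v's own cluster center. -/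
/-- **Centers of neighboring clusters have shifted distance value within 2 of the winning
value.** If `CC x` maximizes `δ u - dist(u,x)` over `u`, and `u` is a vertex at distance `1`
from `v` with `w = CC u`, then
`δ (CC v) - dist(CC v, v) - 2 ≤ δ w - dist(w, v) ≤ δ (CC v) - dist(CC v, v)`. -/
theorem neighbor_cluster_center_close
    {V : Type*} [Fintype V]
    (G : SimpleGraph V) (hconn : G.Connected)
    (δ : V → ℝ) (hδ : ∀ v, 0 ≤ δ v)
    (CC : V → V)
    (hCC : ∀ x u : V, δ u - (G.dist u x : ℝ) ≤ δ (CC x) - (G.dist (CC x) x : ℝ))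
    (u v : V) (hadj : G.dist u v = 1)
    (w : V) (hw : w = CC u) :
    δ (CC v) - (G.dist (CC v) v : ℝ) - 2 ≤ δ w - (G.dist w v : ℝ) ∧
    δ w - (G.dist w v : ℝ) ≤ δ (CC v) - (G.dist (CC v) v : ℝ) := by
  subst hw
  have huv : G.dist u v = G.dist v u := SimpleGraph.dist_comm
  have t1 : G.dist (CC u) v ≤ G.dist (CC u) u + G.dist u v := hconn.dist_triangle
  have t2 : G.dist (CC v) u ≤ G.dist (CC v) v + G.dist v u := hconn.dist_triangle
  have h1 := hCC v (CC u)
  have h2 := hCC u (CC v)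
  have t1' : (G.dist (CC u) v : ℝ) ≤ G.dist (CC u) u + 1 := by
    have := t1; rw [hadj] at this; exact_mod_cast this
  have t2' : (G.dist (CC v) u : ℝ) ≤ G.dist (CC v) v + 1 := by
    have := t2; rw [← huv, hadj] at this; exact_mod_cast this
  constructor
  · linarith
  · exact h1
end

section
/- Let G be a finite connected simple graph with vertex set V and graph distance dist, and let δ : V → ℝ be nonnegative, tie-free shift values; for each vertex x let CC(x) be the unique vertex u maximizing δ_u − dist(u, x). Fix a vertex v and a real q ≥ 0. Then the number of vertices w with w ≠ CC(v) such that the cluster centered at w has radius at least q and contains a vertex at distance 1 from v is at most #{w ∈ V : w ≠ v and δ_w ≥ max(δ_{CC(v)} − dist(CC(v), v) − 2 + dist(w, v), q)}. In other words, the quantity C_q^2(v) is an upper bound on the number of clusters of radius at least q adjacent to v other than v's own cluster. -/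
/-- **`C_q^2(v)` bounds the number of adjacent clusters of radius at least `q`.**
With tie-free nonnegative shifts, the number of vertices `w ≠ CC v` whose cluster has
radius at least `q` and contains a vertex at distance `1` from `v` is at most
`#{w ≠ v : δ w ≥ max (δ_{CC v} - dist(CC v, v) - 2 + dist(w,v)) q}`. -/
theorem adjacent_clusters_bounded_by_C
    {V : Type*} [Fintype V]
    (G : SimpleGraph V) (hconn : G.Connected)
    (δ : V → ℝ) (hδ : ∀ v, 0 ≤ δ v)
    (CC : V → V)
    (hCCmax : ∀ x u : V, δ u - (G.dist u x : ℝ) ≤ δ (CC x) - (G.dist (CC x) x : ℝ))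
    (htie : ∀ x u : V, u ≠ CC x →
      δ u - (G.dist u x : ℝ) < δ (CC x) - (G.dist (CC x) x : ℝ))
    (v : V) (q : ℝ) (hq : 0 ≤ q) :
    Set.ncard {w : V | w ≠ CC v ∧
        (∃ y : V, CC y = w ∧ q ≤ (G.dist w y : ℝ)) ∧
        (∃ y : V, CC y = w ∧ G.dist v y = 1)}
      ≤ Set.ncard {w : V | w ≠ v ∧
        max (δ (CC v) - (G.dist (CC v) v : ℝ) - 2 + (G.dist w v : ℝ)) q ≤ δ w} := by
  apply Set.ncard_le_ncard _ (Set.toFinite _)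
  rintro w ⟨hwCC, ⟨y1, hy1, hqy1⟩, ⟨y2, hy2, hy2d⟩⟩
  have hvv : (G.dist v v : ℝ) = 0 := by simp
  have hy1y1 : (G.dist y1 y1 : ℝ) = 0 := by simp
  have hy2d' : (G.dist v y2 : ℝ) = 1 := by rw [hy2d]; norm_num
  -- triangle inequalities
  have htri1 : (G.dist (CC v) y2 : ℝ) ≤ (G.dist (CC v) v : ℝ) + (G.dist v y2 : ℝ) := by
    exact_mod_cast hconn.dist_triangle
  have htri2 : (G.dist w v : ℝ) ≤ (G.dist w y2 : ℝ) + (G.dist y2 v : ℝ) := by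
    exact_mod_cast hconn.dist_triangle
  have hcomm : (G.dist y2 v : ℝ) = (G.dist v y2 : ℝ) := by rw [G.dist_comm]
  -- main inequality from maximality at y2
  have hmain := hCCmax y2 (CC v)
  rw [hy2] at hmain
  constructor
  · rintro rfl
    have h1 := htie y2 (CC w) (by rw [hy2]; exact fun h => hwCC h.symm)
    rw [hy2] at h1
    have h2 := htie w w hwCC
    rw [hvv] at h2
    linarith
  · refine max_le (by linarith) ?_
    have h3 := hCCmax y1 y1
    rw [hy1, hy1y1] at h3
    have := hδ y1
    linarith
end

section
/- Let F : ℝ → ℝ be nondecreasing and set G̅ := 1 − F. Assume G̅(x) > 0 for all x and F(1) > 0. Let q, m, b be reals with 0 ≤ q ≤ m and 1 ≤ b ≤ m + 2, and let π := sup_{x ≥ q} (G̅(x)/G̅(x+2) − 1), assumed finite. Then (F(b) − F(m))/F(b) ≤ π · G̅(b) / F(1). -/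
/-- **Probability-ratio bound from the window tail-decay quantity `π`.** For a
nondecreasing `F` with positive tail `G̅ = 1 - F` and `F 1 > 0`, if `0 ≤ q ≤ m`,
`1 ≤ b ≤ m + 2`, and `π = sup_{x ≥ q} (G̅ x / G̅(x+2) - 1)` is finite, then
`(F b - F m)/F b ≤ π G̅ b / F 1`. -/
theorem window_tail_bound
    (F : ℝ → ℝ) (hFmono : Monotone F)
    (Gbar : ℝ → ℝ) (hGbar : ∀ x, Gbar x = 1 - F x)
    (hGpos : ∀ x : ℝ, 0 < Gbar x)
    (hF1 : 0 < F 1)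
    (q m b : ℝ) (hq : 0 ≤ q) (hqm : q ≤ m) (hb1 : 1 ≤ b) (hbm : b ≤ m + 2)
    (π : ℝ)
    (hπ : π = sSup {y : ℝ | ∃ x : ℝ, q ≤ x ∧ y = Gbar x / Gbar (x + 2) - 1})
    (hbdd : BddAbove {y : ℝ | ∃ x : ℝ, q ≤ x ∧ y = Gbar x / Gbar (x + 2) - 1}) :
    (F b - F m) / F b ≤ π * Gbar b / F 1 := by
  have hF1b : F 1 ≤ F b := hFmono hb1
  have hFb : 0 < F b := lt_of_lt_of_le hF1 hF1b
  have hπge : Gbar m / Gbar (m + 2) - 1 ≤ π := by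
    rw [hπ]; exact le_csSup hbdd ⟨m, hqm, rfl⟩
  have hGanti : Gbar (m + 2) ≤ Gbar m := by
    rw [hGbar, hGbar]
    have := hFmono (by linarith : m ≤ m + 2)
    linarith
  have hratio : (0 : ℝ) ≤ Gbar m / Gbar (m + 2) - 1 := by
    have := (one_le_div (hGpos (m + 2))).2 hGanti
    linarith
  have hπ0 : 0 ≤ π := hratio.trans hπge
  have hGb : Gbar (m + 2) ≤ Gbar b := by
    rw [hGbar, hGbar]
    have := hFmono hbm
    linarith
  have hnum : F b - F m ≤ π * Gbar b := by
    have h1 : F b - F m ≤ Gbar m - Gbar (m + 2) := by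
      have := hFmono hbm
      rw [hGbar, hGbar]; linarith
    have h2 : Gbar m - Gbar (m + 2) = (Gbar m / Gbar (m + 2) - 1) * Gbar (m + 2) := by
      rw [sub_mul, div_mul_cancel₀ _ (hGpos (m + 2)).ne', one_mul]
    have h3 : (Gbar m / Gbar (m + 2) - 1) * Gbar (m + 2) ≤ π * Gbar (m + 2) :=
      mul_le_mul_of_nonneg_right hπge (hGpos _).le
    have h4 : π * Gbar (m + 2) ≤ π * Gbar b := mul_le_mul_of_nonneg_left hGb hπ0
    linarith
  exact div_le_div₀ (mul_nonneg hπ0 (hGpos b).le) hnum hF1 hF1b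
end

section
/- Let G = (V, E) be a finite simple graph, let M and O be matchings in G, let ε ∈ (0, 1), and let Λ ⊆ O satisfy |Λ| ≤ (ε/3)·|O| and the property that every edge in O \ Λ shares at least one endpoint with some edge of M. Then |M| ≥ (3−ε)/6 · |O| ≥ |O|/(2+ε). In particular, if O is a maximum matching, M is a (2+ε)-approximate maximum matching. -/
/-- **Approximation ratio of the output matching.** If `M` and `O` are matchings,
`ε ∈ (0,1)`, and `Λ ⊆ O` with `|Λ| ≤ (ε/3)|O|` is such that every edge of `O \ Λ`
shares an endpoint with some edge of `M`, then
`|M| ≥ (3-ε)/6 · |O| ≥ |O|/(2+ε)`. -/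
theorem matching_approximation_ratio
    {V : Type*} [Fintype V] [DecidableEq V]
    (G : SimpleGraph V)
    (M O Λ : Finset (Sym2 V))
    (hME : ∀ e ∈ M, e ∈ G.edgeSet)
    (hMmatch : ∀ e ∈ M, ∀ f ∈ M, e ≠ f → ∀ x : V, x ∈ e → x ∉ f)
    (hOE : ∀ e ∈ O, e ∈ G.edgeSet)
    (hOmatch : ∀ e ∈ O, ∀ f ∈ O, e ≠ f → ∀ x : V, x ∈ e → x ∉ f)
    (ε : ℝ) (hε0 : 0 < ε) (hε1 : ε < 1)
    (hΛ : Λ ⊆ O)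
    (hΛsize : (Λ.card : ℝ) ≤ (ε / 3) * O.card)
    (hcov : ∀ e ∈ O \ Λ, ∃ f ∈ M, ∃ x : V, x ∈ e ∧ x ∈ f) :
    (3 - ε) / 6 * O.card ≤ (M.card : ℝ) ∧
    (O.card : ℝ) / (2 + ε) ≤ (3 - ε) / 6 * O.card := by
  classical
  have hOnn : (0:ℝ) ≤ O.card := Nat.cast_nonneg _
  -- key: |O \ Λ| ≤ 2 |M|
  have key : ((O \ Λ).card : ℝ) ≤ 2 * M.card := by
    choose F hFM x hx1 hx2 using hcov
    set s := (O \ Λ).attach with hs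
    set g : {e // e ∈ O \ Λ} → Sym2 V := fun e => F e.1 e.2 with hg
    have himg : s.image g ⊆ M := by
      intro f hf
      obtain ⟨e, _, rfl⟩ := Finset.mem_image.mp hf
      exact hFM e.1 e.2
    have hfiber : ∀ f ∈ s.image g, (s.filter fun e => g e = f).card ≤ 2 := by
      intro f hf
      have hfM : f ∈ M := himg hf
      -- the map e ↦ x e is injective on the fiber, lands in vertices of f
      have hsub : (s.filter fun e => g e = f).image (fun e : {e // e ∈ O \ Λ} => x e.1 e.2) ⊆
          Finset.univ.filter (· ∈ f) := by
        intro v hv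
        obtain ⟨e, he, rfl⟩ := Finset.mem_image.mp hv
        have := (Finset.mem_filter.mp he).2
        simp only [Finset.mem_filter, Finset.mem_univ, true_and]
        have hge : F e.1 e.2 = f := (Finset.mem_filter.mp he).2
        exact hge ▸ hx2 e.1 e.2
      have hinj : Set.InjOn (fun e : {e // e ∈ O \ Λ} => x e.1 e.2) (s.filter fun e => g e = f) := by
        intro a ha b hb hab
        by_contra hne
        have hne' : (a.1 : Sym2 V) ≠ b.1 := fun h => hne (Subtype.ext h)
        have haO : a.1 ∈ O := (Finset.mem_sdiff.mp a.2).1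
        have hbO : b.1 ∈ O := (Finset.mem_sdiff.mp b.2).1
        have := hOmatch a.1 haO b.1 hbO hne' (x a.1 a.2) (hx1 a.1 a.2)
        have hab' : x a.1 a.2 = x b.1 b.2 := hab
        rw [hab'] at this
        exact this (hx1 b.1 b.2)
      have hcard2 : (Finset.univ.filter (· ∈ f)).card ≤ 2 := by
        induction f using Sym2.inductionOn with
        | hf a b =>
          have : Finset.univ.filter (· ∈ s(a, b)) ⊆ {a, b} := by
            intro v hv
            simp only [Finset.mem_filter, Sym2.mem_iff] at hv
            simp [hv.2]
          calc (Finset.univ.filter (· ∈ s(a,b))).card ≤ ({a, b} : Finset V).card :=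
                Finset.card_le_card this
            _ ≤ 2 := Finset.card_insert_le _ _ |>.trans (by simp)
      calc (s.filter fun e => g e = f).card
          = ((s.filter fun e => g e = f).image (fun e : {e // e ∈ O \ Λ} => x e.1 e.2)).card :=
            (Finset.card_image_of_injOn hinj).symm
        _ ≤ (Finset.univ.filter (· ∈ f)).card := Finset.card_le_card hsub
        _ ≤ 2 := hcard2
    have h1 : s.card ≤ 2 * (s.image g).card := Finset.card_le_mul_card_image s 2 hfiber
    have h2 : (s.image g).card ≤ M.card := Finset.card_le_card himg
    have h3 : (O \ Λ).card ≤ 2 * M.card := by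
      have hce : s.card = (O \ Λ).card := Finset.card_attach
      omega
    exact_mod_cast h3
  have hcards : ((O \ Λ).card : ℝ) = O.card - Λ.card := by
    rw [Finset.card_sdiff_of_subset hΛ]
    have := Finset.card_le_card hΛ
    push_cast [Nat.cast_sub this]
    ring
  constructor
  · rw [hcards] at key
    linarith
  · rw [div_le_iff₀ (by linarith : (0:ℝ) < 2 + ε)]
    nlinarith [mul_nonneg (mul_nonneg hε0.le (by linarith : (0:ℝ) ≤ 1 - ε)) hOnn]
end

section
/- Let G = (V, E) be a finite simple graph and let w : E → ℝ satisfy 0 ≤ w(e) for all e and Σ_{e ∋ x} w(e) ≤ 1/4 for every vertex x. Let (X_e)_{e ∈ E} be independent Bernoulli random variables with P(X_e = 1) = w(e). Call two distinct edges neighboring if they share an endpoint. Fix a vertex v. Then the probability that there exists an edge e incident to v with X_e = 1 and X_{e'} = 0 for every edge e' neighboring e is at least (1/2)·Σ_{e ∋ v} w(e). -/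
/-!
Let `A e` be the event that the edge `e` self-nominates and none of its neighbours does. Two
edges at `v` are neighbours, so the events `A e`, `e ∋ v`, are disjoint, and by independence
`P (A e) = w e · ∏_{f ∼ e} (1 - w f) ≥ w e · (1 - ∑_{f ∼ e} w f)`. The neighbours of `e = xy`
are incident to `x` or `y`, so their total weight is at most `1/4 + 1/4`, giving
`P (A e) ≥ w e / 2`; summing over `e ∋ v` gives the claim.
-/

open MeasureTheory ProbabilityTheory Finset

theorem Finset.one_sub_sum_le_prod_one_sub {ι : Type*} (s : Finset ι) {g : ι → ℝ}
    (hg0 : ∀ i ∈ s, 0 ≤ g i) (hg1 : ∀ i ∈ s, g i ≤ 1) :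
    1 - ∑ i ∈ s, g i ≤ ∏ i ∈ s, (1 - g i) := by
  induction s using Finset.cons_induction with
  | empty => simp
  | cons a s ha ih =>
    simp only [forall_mem_cons] at hg0 hg1
    rw [sum_cons, prod_cons]
    have hs : 0 ≤ ∑ i ∈ s, g i := sum_nonneg hg0.2
    nlinarith [mul_le_mul_of_nonneg_left (ih hg0.2 hg1.2) (sub_nonneg.2 hg1.1)]

namespace ProbabilityTheory.iIndepFun

variable {ι Ω : Type*} [MeasurableSpace Ω] {P : Measure Ω} {X : ι → Ω → Bool}

theorem measure_eq_true_inter_biInter_eq_false (hX : iIndepFun X P) {i : ι} {S : Finset ι}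
    (hi : i ∉ S) :
    P ({ω | X i ω = true} ∩ ⋂ j ∈ S, {ω | X j ω = false}) =
      P {ω | X i ω = true} * ∏ j ∈ S, P {ω | X j ω = false} := by
  classical
  have key := hX.measure_inter_preimage_eq_mul (insert i S)
    (sets := fun j => if j = i then {true} else {false}) (fun _ _ => by split_ifs <;> simp)
  rw [prod_insert hi, if_pos rfl] at key
  rw [prod_congr rfl fun j hj => by rw [if_neg (ne_of_mem_of_not_mem hj hi)]] at key
  refine Eq.trans ?_ key
  congr 1
  ext ω
  simp only [Set.mem_inter_iff, Set.mem_iInter, mem_insert, forall_eq_or_imp, if_pos,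
    Set.mem_preimage, Set.mem_singleton_iff, Set.mem_ofPred_eq]
  refine and_congr_right' (forall₂_congr fun j hj => ?_)
  rw [if_neg (ne_of_mem_of_not_mem hj hi), Set.mem_singleton_iff]

theorem measure_eq_true_inter_biInter_eq_false_of_subset {s : Set ι}
    (hX : iIndepFun (fun j : s => X j) P) {i : ι} (his : i ∈ s) {S : Finset ι} (hSs : ↑S ⊆ s)
    (hi : i ∉ S) :
    P ({ω | X i ω = true} ∩ ⋂ j ∈ S, {ω | X j ω = false}) =
      P {ω | X i ω = true} * ∏ j ∈ S, P {ω | X j ω = false} := by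
  classical
  have key := hX.measure_eq_true_inter_biInter_eq_false (i := ⟨i, his⟩) (S := S.subtype (· ∈ s))
    (by simpa using hi)
  rw [prod_subtype_eq_prod_filter (f := fun j => P {ω | X j ω = false}),
    filter_true_of_mem fun j hj => hSs hj] at key
  convert key using 3
  ext ω
  simp only [Set.mem_iInter, mem_subtype, Set.mem_ofPred_eq, Subtype.forall]
  exact ⟨fun h j _ hj => h j hj, fun h j hj => h j (hSs hj) hj⟩

theorem mul_one_sub_sum_le_measureReal_eq_true_inter_biInter_eq_false [IsProbabilityMeasure P]
    {s : Set ι} (hX : iIndepFun (fun j : s => X j) P) (hmeas : ∀ j, Measurable (X j)) {i : ι}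
    (his : i ∈ s) {S : Finset ι} (hSs : ↑S ⊆ s) (hi : i ∉ S) :
    P.real {ω | X i ω = true} * (1 - ∑ j ∈ S, P.real {ω | X j ω = true}) ≤
      P.real ({ω | X i ω = true} ∩ ⋂ j ∈ S, {ω | X j ω = false}) := by
  have h_false : ∀ j, P.real {ω | X j ω = false} = 1 - P.real {ω | X j ω = true} := fun j => by
    have hm : MeasurableSet {ω | X j ω = true} := hmeas j (measurableSet_singleton true)
    rw [← probReal_compl_eq_one_sub hm]
    congr 1
    ext ω
    simp
  have h_eq := congrArg ENNReal.toReal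
    (hX.measure_eq_true_inter_biInter_eq_false_of_subset his hSs hi)
  rw [ENNReal.toReal_mul, ENNReal.toReal_prod] at h_eq
  simp only [← measureReal_def, h_false] at h_eq
  rw [h_eq]
  gcongr
  exact one_sub_sum_le_prod_one_sub S (fun _ _ => measureReal_nonneg) fun _ _ => measureReal_le_one

end ProbabilityTheory.iIndepFun

namespace SimpleGraph

variable {V : Type*} [Fintype V] [DecidableEq V] (G : SimpleGraph V) [DecidableRel G.Adj]

def neighborEdgeFinset (e : Sym2 V) : Finset (Sym2 V) :=
  G.edgeFinset.filter fun f => f ≠ e ∧ ∃ y ∈ e, y ∈ f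

theorem sum_neighborEdgeFinset_le {w : Sym2 V → ℝ} (hw : ∀ e ∈ G.edgeSet, 0 ≤ w e) (x y : V) :
    ∑ f ∈ G.neighborEdgeFinset s(x, y), w f ≤
      ∑ f ∈ G.edgeFinset.filter (x ∈ ·), w f + ∑ f ∈ G.edgeFinset.filter (y ∈ ·), w f := by
  have hw' : ∀ f ∈ G.edgeFinset, 0 ≤ w f := fun f hf => hw f (mem_edgeFinset.1 hf)
  have hsub : G.neighborEdgeFinset s(x, y) ⊆
      G.edgeFinset.filter (x ∈ ·) ∪ G.edgeFinset.filter (y ∈ ·) := by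
    intro f hf
    obtain ⟨hfE, -, z, hz, hzf⟩ := mem_filter.1 hf
    rcases Sym2.mem_iff.1 hz with rfl | rfl <;> simp [hfE, hzf]
  calc _ ≤ ∑ f ∈ G.edgeFinset.filter (x ∈ ·) ∪ G.edgeFinset.filter (y ∈ ·), w f :=
        sum_le_sum_of_subset_of_nonneg hsub fun f hf _ =>
          hw' f (union_subset (filter_subset _ _) (filter_subset _ _) hf)
    _ ≤ _ := by
        rw [← sum_union_inter]
        exact le_add_of_nonneg_right
          (sum_nonneg fun f hf => hw' f (filter_subset _ _ (mem_inter.1 hf).1))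

variable {Ω : Type*}

def successEvent (X : Sym2 V → Ω → Bool) (e : Sym2 V) : Set Ω :=
  {ω | X e ω = true} ∩ ⋂ f ∈ G.neighborEdgeFinset e, {ω | X f ω = false}

theorem measurableSet_successEvent [MeasurableSpace Ω] {X : Sym2 V → Ω → Bool}
    (hX : ∀ e, Measurable (X e)) (e : Sym2 V) : MeasurableSet (G.successEvent X e) :=
  (hX e (measurableSet_singleton _)).inter
    (Finset.measurableSet_biInter _ fun f _ => hX f (measurableSet_singleton _))

theorem pairwiseDisjoint_successEvent (X : Sym2 V → Ω → Bool) (v : V) :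
    (G.edgeFinset.filter (v ∈ ·) : Set (Sym2 V)).PairwiseDisjoint (G.successEvent X) := by
  intro e he f hf hef
  simp only [coe_filter, Set.mem_ofPred_eq] at he hf
  rw [Function.onFun, Set.disjoint_left]
  rintro ω ⟨-, hωe⟩ ⟨hωf, -⟩
  have hfN : f ∈ G.neighborEdgeFinset e := mem_filter.2 ⟨hf.1, hef.symm, v, he.2, hf.2⟩
  have hωf' : X f ω = false := Set.mem_iInter₂.1 hωe f hfN
  simp [hωf'] at hωf

theorem biUnion_successEvent_subset (X : Sym2 V → Ω → Bool) (v : V) :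
    ⋃ e ∈ G.edgeFinset.filter (v ∈ ·), G.successEvent X e ⊆
      {ω | ∃ e ∈ G.edgeSet, v ∈ e ∧ X e ω = true ∧
        ∀ f ∈ G.edgeSet, f ≠ e → (∃ y ∈ e, y ∈ f) → X f ω = false} := by
  simp only [Set.iUnion_subset_iff, mem_filter, mem_edgeFinset]
  rintro e ⟨he, hve⟩ ω ⟨hωe, hωN⟩
  rw [Set.mem_iInter₂] at hωN
  exact ⟨e, he, hve, hωe, fun f hf hfe hef =>
    hωN f (mem_filter.2 ⟨mem_edgeFinset.2 hf, hfe, hef⟩)⟩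

end SimpleGraph

open SimpleGraph in
/-- **Success probability of the self-nomination step.** Edges `e` self-nominate
independently with probability `w e`, where `Σ_{e ∋ x} w e ≤ 1/4` for every vertex `x`.
Then for any vertex `v`, the probability that some edge incident to `v` self-nominates
while no edge neighboring it does is at least `(1/2) Σ_{e ∋ v} w e`. -/
theorem self_nomination_success
    {V : Type*} [Fintype V] [DecidableEq V]
    (G : SimpleGraph V) [DecidableRel G.Adj]
    (w : Sym2 V → ℝ)
    (hw0 : ∀ e ∈ G.edgeSet, 0 ≤ w e)
    (hw14 : ∀ x : V, ∑ e ∈ G.edgeFinset.filter (fun e => x ∈ e), w e ≤ 1 / 4)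
    {Ω : Type*} [MeasurableSpace Ω] (P : Measure Ω) [IsProbabilityMeasure P]
    (X : Sym2 V → Ω → Bool)
    (hmeas : ∀ e, Measurable (X e))
    (hindep : iIndepFun (m := fun _ : G.edgeSet => (inferInstance : MeasurableSpace Bool))
      (fun e : G.edgeSet => X e) P)
    (hBern : ∀ e ∈ G.edgeSet, (P {ω | X e ω = true}).toReal = w e)
    (v : V) :
    ENNReal.ofReal ((1 / 2) * ∑ e ∈ G.edgeFinset.filter (fun e => v ∈ e), w e) ≤
      P {ω : Ω | ∃ e ∈ G.edgeSet, v ∈ e ∧ X e ω = true ∧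
        ∀ f ∈ G.edgeSet, f ≠ e → (∃ y : V, y ∈ e ∧ y ∈ f) → X f ω = false} := by
  have hBern' : ∀ e ∈ G.edgeSet, P.real {ω | X e ω = true} = w e := hBern
  have h_success : ∀ e ∈ G.edgeSet, w e / 2 ≤ P.real (G.successEvent X e) := by
    intro e he
    have hN : ↑(G.neighborEdgeFinset e) ⊆ G.edgeSet := fun f hf =>
      mem_edgeFinset.1 (mem_filter.1 hf).1
    have h_bound := hindep.mul_one_sub_sum_le_measureReal_eq_true_inter_biInter_eq_false hmeas he
      hN fun h => (mem_filter.1 h).2.1 rfl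
    rw [hBern' e he, sum_congr rfl fun f hf => hBern' f (hN hf)] at h_bound
    have h_half : ∑ f ∈ G.neighborEdgeFinset e, w f ≤ 1 / 2 := by
      induction e using Sym2.ind with
      | _ x y => linarith [G.sum_neighborEdgeFinset_le hw0 x y, hw14 x, hw14 y]
    rw [successEvent]
    nlinarith [mul_le_mul_of_nonneg_left h_half (hw0 e he)]
  rw [ENNReal.ofReal_le_iff_le_toReal (measure_ne_top _ _), ← measureReal_def]
  calc 1 / 2 * ∑ e ∈ G.edgeFinset.filter (v ∈ ·), w e
      = ∑ e ∈ G.edgeFinset.filter (v ∈ ·), w e / 2 := by rw [mul_sum]; ring_nf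
    _ ≤ ∑ e ∈ G.edgeFinset.filter (v ∈ ·), P.real (G.successEvent X e) :=
      sum_le_sum fun e he => h_success e (mem_edgeFinset.1 (mem_filter.1 he).1)
    _ = P.real (⋃ e ∈ G.edgeFinset.filter (v ∈ ·), G.successEvent X e) :=
      (measureReal_biUnion_finset (G.pairwiseDisjoint_successEvent X v)
        fun e _ => G.measurableSet_successEvent hmeas e).symm
    _ ≤ _ := measureReal_mono (G.biUnion_successEvent_subset X v)
end

section
/- For every real constant c ≥ 4 there exists N such that for all integers n ≥ N the following holds. Let α := c·log₂ n / log₂ log₂ n. Then Σ_{r=0}^{⌊(log₂ n)^{1/3}⌋} e^{−α/(1+r)} ≤ (1/4)·(log₂ n)^{−297/c}. -/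
/-!
Write `L = log₂ n`. Then `α = c·ln 2·L / ln L ≥ 2L / ln L ≥ 2L^{5/6}` as soon as
`ln L ≤ L^{1/6}`, while `1 + r ≤ 2L^{1/3}` for every `r` in the range, so each of the at most `2L`
terms is at most `e^{-√L}`. As `2L·e^{-√L}` decays faster than any power of `L`, it is eventually
below `(1/4)L^{-75} ≤ (1/4)L^{-297/c}` (this is where `c ≥ 4` enters, together with
`c·ln 2 ≥ 2`), and `L → ∞` with `n`.
-/

open Real Filter

lemma eventually_log_le_rpow_one_sixth : ∀ᶠ L : ℝ in atTop, log L ≤ L ^ (1 / 6 : ℝ) := by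
  filter_upwards [(isLittleO_log_rpow_atTop (by norm_num : (0 : ℝ) < 1 / 6)).bound one_pos,
    eventually_ge_atTop 0] with L hL hL0
  simpa [abs_of_nonneg (rpow_nonneg hL0 _)] using (le_abs_self _).trans hL

lemma two_mul_rpow_five_sixths_le_mul_div_logb {c L : ℝ} (hc : 4 ≤ c) (hL : 1 < L)
    (hlog : log L ≤ L ^ (1 / 6 : ℝ)) : 2 * L ^ (5 / 6 : ℝ) ≤ c * L / logb 2 L := by
  have hL0 : 0 < L := one_pos.trans hL
  have hlog0 : 0 < log L := log_pos hL
  have hc2 : 2 ≤ c * log 2 := by nlinarith [log_two_gt_d9]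
  calc 2 * L ^ (5 / 6 : ℝ) = 2 * L / L ^ (1 / 6 : ℝ) := by
        rw [eq_div_iff (rpow_pos_of_pos hL0 _).ne', mul_assoc, ← rpow_add hL0]; norm_num
    _ ≤ 2 * L / log L := div_le_div_of_nonneg_left (by positivity) hlog0 hlog
    _ ≤ c * log 2 * L / log L := by gcongr
    _ = c * L / logb 2 L := by rw [logb]; field_simp

lemma exp_neg_div_one_add_le_exp_neg_sqrt {α L r : ℝ} (hL : 1 ≤ L) (hr0 : 0 ≤ r)
    (hr : r ≤ L ^ (1 / 3 : ℝ)) (hα : 2 * L ^ (5 / 6 : ℝ) ≤ α) :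
    exp (-α / (1 + r)) ≤ exp (-√L) := by
  have hL0 : 0 < L := one_pos.trans_le hL
  have hcube : 1 ≤ L ^ (1 / 3 : ℝ) := one_le_rpow hL (by norm_num)
  have hsplit : L ^ (5 / 6 : ℝ) = √L * L ^ (1 / 3 : ℝ) := by
    rw [sqrt_eq_rpow, ← rpow_add hL0]; norm_num
  rw [exp_le_exp, neg_div, neg_le_neg_iff, le_div_iff₀ (by positivity)]
  calc √L * (1 + r) ≤ √L * (2 * L ^ (1 / 3 : ℝ)) := by gcongr; linarith
    _ = 2 * L ^ (5 / 6 : ℝ) := by rw [hsplit]; ring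
    _ ≤ α := hα

lemma sum_exp_neg_div_one_add_le {α L : ℝ} (hL : 1 ≤ L) (hα : 2 * L ^ (5 / 6 : ℝ) ≤ α) :
    ∑ r ∈ Finset.range (⌊L ^ (1 / 3 : ℝ)⌋₊ + 1), exp (-α / (1 + (r : ℝ)))
      ≤ 2 * L * exp (-√L) := by
  have hcount : ((⌊L ^ (1 / 3 : ℝ)⌋₊ + 1 : ℕ) : ℝ) ≤ 2 * L := by
    have := Nat.floor_le (rpow_nonneg (zero_le_one.trans hL) (1 / 3 : ℝ))
    have := rpow_le_self_of_one_le hL (by norm_num : (1 / 3 : ℝ) ≤ 1)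
    push_cast; linarith
  calc _ ≤ (Finset.range (⌊L ^ (1 / 3 : ℝ)⌋₊ + 1)).card • exp (-√L) := by
        refine Finset.sum_le_card_nsmul _ _ _ fun r hr => ?_
        refine exp_neg_div_one_add_le_exp_neg_sqrt hL r.cast_nonneg ?_ hα
        exact (Nat.cast_le.mpr (Nat.lt_succ_iff.mp (Finset.mem_range.mp hr))).trans
          (Nat.floor_le (rpow_nonneg (zero_le_one.trans hL) _))
    _ ≤ 2 * L * exp (-√L) := by
        rw [Finset.card_range, nsmul_eq_mul]; gcongr

lemma eventually_two_mul_exp_neg_sqrt_le :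
    ∀ᶠ L : ℝ in atTop, 2 * L * exp (-√L) ≤ 1 / 4 * L ^ (-75 : ℝ) := by
  have hsmall : ∀ᶠ L : ℝ in atTop, √L ^ 152 * exp (-√L) ≤ 1 / 8 :=
    tendsto_sqrt_atTop.eventually
      ((tendsto_pow_mul_exp_neg_atTop_nhds_zero 152).eventually (ge_mem_nhds (by norm_num)))
  filter_upwards [hsmall, eventually_gt_atTop 0] with L hL hL0
  have hsq : L = √L ^ 2 := (sq_sqrt hL0.le).symm
  have hpow : L ^ (75 : ℝ) = √L ^ 150 := by
    rw [show (75 : ℝ) = (75 : ℕ) by norm_num, rpow_natCast, hsq, ← pow_mul]; norm_num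
  rw [rpow_neg hL0.le, hpow, ← div_eq_mul_inv, le_div_iff₀ (by positivity)]
  calc 2 * L * exp (-√L) * √L ^ 150 = 2 * (√L ^ 152 * exp (-√L)) := by
        nth_rewrite 1 [hsq]; ring
    _ ≤ 1 / 4 := by linarith

lemma eventually_sum_caps_le (c : ℝ) (hc : 4 ≤ c) : ∀ᶠ L : ℝ in atTop,
    ∑ r ∈ Finset.range (⌊L ^ (1 / 3 : ℝ)⌋₊ + 1), exp (-(c * L / logb 2 L) / (1 + (r : ℝ)))
      ≤ 1 / 4 * L ^ (-297 / c) := by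
  filter_upwards [eventually_log_le_rpow_one_sixth, eventually_two_mul_exp_neg_sqrt_le,
    eventually_gt_atTop 1] with L hlog hdecay hL
  have hexp : -75 ≤ -297 / c := by
    rw [le_div_iff₀ (by linarith)]; linarith
  calc _ ≤ 2 * L * exp (-√L) :=
        sum_exp_neg_div_one_add_le hL.le (two_mul_rpow_five_sixths_le_mul_div_logb hc hL hlog)
    _ ≤ 1 / 4 * L ^ (-75 : ℝ) := hdecay
    _ ≤ 1 / 4 * L ^ (-297 / c) := by gcongr; exact hL.le

/-- **Initial sum of caps is small.** For every `c ≥ 4` there is `N` such that for all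
`n ≥ N`, with `α = c log₂ n / log₂ log₂ n`,
`Σ_{r=0}^{⌊(log₂ n)^{1/3}⌋} e^{-α/(1+r)} ≤ (1/4) (log₂ n)^{-297/c}`. -/
theorem initial_caps_bound (c : ℝ) (hc : 4 ≤ c) :
    ∃ N : ℕ, ∀ n : ℕ, N ≤ n →
      ∀ α : ℝ, α = c * Real.logb 2 n / Real.logb 2 (Real.logb 2 n) →
      ∑ r ∈ Finset.range (⌊(Real.logb 2 n) ^ ((1 : ℝ) / 3)⌋₊ + 1),
          Real.exp (-α / (1 + (r : ℝ)))
        ≤ (1 / 4) * (Real.logb 2 n) ^ (-(297 : ℝ) / c) := by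
  have hlog : Tendsto (fun n : ℕ => logb 2 n) atTop atTop :=
    (tendsto_logb_atTop one_lt_two).comp tendsto_natCast_atTop_atTop
  obtain ⟨N, hN⟩ := eventually_atTop.mp (hlog.eventually (eventually_sum_caps_le c hc))
  exact ⟨N, fun n hn α hα => hα ▸ hN n hn⟩
end
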